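/- arXiv:quant-ph/0104072 — 8 statements merged into one kernel-verified Lean document; each statement's English description precedes it below -/
import Mathlib

section
/- Let n ≥ 1 and let γ be a real symmetric positive definite 2n×2n matrix, and let J = J_n be the standard symplectic form. Then γ - Jᵀ γ⁻¹ J is positive semidefinite (as a real symmetric matrix) if and only if the complex Hermitian matrix γ + i·J (obtained by mapping the real entries of γ and J into ℂ) is positive semidefinite. -/
open Matrix Complex
open scoped ComplexOrder

/-- The standard symplectic form `J_n`: block-diagonal with `n` copies of
`J₁ = !![0,-1;1,0]`. -/
noncomputable def Jmat (n : ℕ) : Matrix (Fin (2 * n)) (Fin (2 * n)) ℝ :=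
  Matrix.of fun i j =>
    if (j : ℕ) = (i : ℕ) + 1 ∧ (i : ℕ) % 2 = 0 then -1
    else if (i : ℕ) = (j : ℕ) + 1 ∧ (j : ℕ) % 2 = 0 then 1 else 0

lemma Jmat_antisymm (n : ℕ) : (Jmat n)ᵀ = -(Jmat n) := by
  ext i j
  simp only [transpose_apply, Matrix.neg_apply, Jmat, of_apply]
  split_ifs with h1 h2 h3
  · exfalso; omega
  · norm_num
  · norm_num
  · norm_num

-- antisym quadratic form zero
lemma antisymm_quad {m : Type*} [Fintype m] (A : Matrix m m ℝ) (hA : Aᵀ = -A) (v : m → ℝ) :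
    v ⬝ᵥ A.mulVec v = 0 := by
  have h : v ⬝ᵥ A.mulVec v = v ⬝ᵥ (Aᵀ).mulVec v := by
    rw [Matrix.dotProduct_mulVec, ← Matrix.mulVec_transpose, dotProduct_comm]
  rw [hA] at h
  simp only [Matrix.neg_mulVec, dotProduct_neg] at h
  linarith

lemma symm_dot {m : Type*} [Fintype m] (A : Matrix m m ℝ) (hA : A.IsSymm) (x y : m → ℝ) :
    x ⬝ᵥ A.mulVec y = y ⬝ᵥ A.mulVec x := by
  rw [Matrix.dotProduct_mulVec, ← Matrix.mulVec_transpose, hA.eq, dotProduct_comm]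

lemma map_dot {m : Type*} [Fintype m] (M : Matrix m m ℝ) (x y : m → ℝ) :
    (fun i => (x i : ℂ)) ⬝ᵥ (M.map Complex.ofReal).mulVec (fun i => (y i : ℂ))
      = ((x ⬝ᵥ M.mulVec y : ℝ) : ℂ) := by
  simp [dotProduct, Matrix.mulVec, Matrix.map_apply, Finset.mul_sum]


lemma cform {m : Type*} [Fintype m] (A B : Matrix m m ℝ) (hA : A.IsSymm) (hB : Bᵀ = -B)
    (x y : m → ℝ) :
    star ((fun i => (x i : ℂ)) + Complex.I • (fun i => (y i : ℂ))) ⬝ᵥ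
        (A.map Complex.ofReal + Complex.I • B.map Complex.ofReal).mulVec
          ((fun i => (x i : ℂ)) + Complex.I • (fun i => (y i : ℂ)))
      = ((x ⬝ᵥ A.mulVec x + y ⬝ᵥ A.mulVec y - 2 * (x ⬝ᵥ B.mulVec y) : ℝ) : ℂ) := by
  have hstar : star ((fun i => (x i : ℂ)) + Complex.I • (fun i => (y i : ℂ)))
      = (fun i => (x i : ℂ)) - Complex.I • (fun i => (y i : ℂ)) := by
    funext i
    simp [Complex.ext_iff]
  rw [hstar]
  have e1 := map_dot A x x
  have e2 := map_dot A x y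
  have e3 := map_dot A y x
  have e4 := map_dot B x x
  have e5 := map_dot B x y
  have e6 := map_dot B y x
  have e7 := map_dot A y y
  have e8 := map_dot B y y
  have hsy : y ⬝ᵥ A.mulVec x = x ⬝ᵥ A.mulVec y := symm_dot A hA y x
  have hbx : x ⬝ᵥ B.mulVec x = 0 := antisymm_quad B hB x
  have hby : y ⬝ᵥ B.mulVec y = 0 := antisymm_quad B hB y
  have hbyx : y ⬝ᵥ B.mulVec x = -(x ⬝ᵥ B.mulVec y) := by
    rw [Matrix.dotProduct_mulVec, ← Matrix.mulVec_transpose, hB]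
    simp [Matrix.neg_mulVec, dotProduct_comm]
  simp only [Matrix.add_mulVec, Matrix.mulVec_add, Matrix.mulVec_smul, Matrix.smul_mulVec,
    dotProduct_add, sub_dotProduct, dotProduct_smul, smul_dotProduct, smul_eq_mul,
    smul_add, dotProduct_sub]
  rw [e1, e2, e3, e4, e5, e6, e7, e8]
  rw [hsy, hbx, hby, hbyx]
  push_cast
  linear_combination (2*((x ⬝ᵥ B.mulVec y : ℝ):ℂ) - ((y ⬝ᵥ A.mulVec y : ℝ):ℂ)) * Complex.I_sq

lemma real_key {m : Type*} [Fintype m] [DecidableEq m] (γ J : Matrix m m ℝ)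
    (hsym : γ.IsSymm) (hγ : γ * γ⁻¹ = 1) (x y : m → ℝ) :
    (x - γ⁻¹.mulVec (J.mulVec y)) ⬝ᵥ γ.mulVec (x - γ⁻¹.mulVec (J.mulVec y))
      + y ⬝ᵥ (γ - Jᵀ * γ⁻¹ * J).mulVec y
    = x ⬝ᵥ γ.mulVec x + y ⬝ᵥ γ.mulVec y - 2 * (x ⬝ᵥ J.mulVec y) := by
  set w := γ⁻¹.mulVec (J.mulVec y) with hw
  have hγw : γ.mulVec w = J.mulVec y := by
    rw [hw, Matrix.mulVec_mulVec, hγ, Matrix.one_mulVec]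
  have h1 : y ⬝ᵥ (Jᵀ * γ⁻¹ * J).mulVec y = w ⬝ᵥ γ.mulVec w := by
    have hw2 : (γ⁻¹ * J) *ᵥ y = w := by rw [hw, Matrix.mulVec_mulVec]
    rw [mul_assoc, ← Matrix.mulVec_mulVec, hw2, Matrix.dotProduct_mulVec,
      Matrix.vecMul_transpose, ← hγw, dotProduct_comm]
  have h2 : x ⬝ᵥ γ.mulVec w = x ⬝ᵥ J.mulVec y := by rw [hγw]
  have h3 : w ⬝ᵥ γ.mulVec x = x ⬝ᵥ γ.mulVec w := symm_dot γ hsym w x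
  simp only [Matrix.sub_mulVec, Matrix.mulVec_sub, dotProduct_sub, sub_dotProduct]
  rw [h1]
  linarith

theorem stmt0 (n : ℕ) (hn : 1 ≤ n) (γ : Matrix (Fin (2 * n)) (Fin (2 * n)) ℝ)
    (hsym : γ.IsSymm) (hpd : γ.PosDef) :
    (γ - (Jmat n)ᵀ * γ⁻¹ * Jmat n).PosSemidef ↔
      (γ.map (Complex.ofReal) + Complex.I • (Jmat n).map (Complex.ofReal)).PosSemidef := by
  set J := Jmat n with hJdef
  have hJ : Jᵀ = -J := Jmat_antisymm n
  have hdet : IsUnit γ.det := hpd.det_pos.ne'.isUnit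
  have hγinv : γ * γ⁻¹ = 1 := Matrix.mul_nonsing_inv γ hdet
  have hinvsym : (γ⁻¹).IsSymm := by
    rw [Matrix.IsSymm, Matrix.transpose_nonsing_inv, hsym.eq]
  have hinvpsd : (γ⁻¹).PosSemidef := hpd.inv.posSemidef
  have hγe : ∀ i j, γ j i = γ i j := fun i j => congrFun (congrFun hsym i) j
  have hJe : ∀ i j, J j i = -(J i j) := fun i j => by
    have := congrFun (congrFun hJ i) j
    simpa using this
  constructor
  · intro hreal
    refine Matrix.posSemidef_iff_dotProduct_mulVec.mpr ⟨?_, ?_⟩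
    · ext i j
      simp only [Matrix.conjTranspose_apply, Matrix.add_apply, Matrix.smul_apply,
        Matrix.map_apply, star_add, smul_eq_mul]
      rw [hγe i j, hJe i j]
      simp [Complex.ext_iff]
    · intro z
      set x : Fin (2*n) → ℝ := fun i => (z i).re with hx
      set y : Fin (2*n) → ℝ := fun i => (z i).im with hy
      have hz : z = (fun i => (x i : ℂ)) + Complex.I • (fun i => (y i : ℂ)) := by
        funext i
        simp [hx, hy, Complex.ext_iff]
      rw [hz, cform γ J hsym hJ x y, ← real_key γ J hsym hγinv x y]
      rw [Complex.zero_le_real]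
      have t1 := hpd.posSemidef.dotProduct_mulVec_nonneg (x - γ⁻¹ *ᵥ (J *ᵥ y))
      have t2 := hreal.dotProduct_mulVec_nonneg y
      simp only [star_trivial] at t1 t2
      linarith
  · intro hc
    refine Matrix.posSemidef_iff_dotProduct_mulVec.mpr ⟨?_, ?_⟩
    · show _ = _
      rw [Matrix.conjTranspose_eq_transpose_of_trivial, Matrix.transpose_sub,
        Matrix.transpose_mul, Matrix.transpose_mul, Matrix.transpose_transpose,
        hinvsym.eq, hsym.eq, mul_assoc]
    · intro v
      have h0 := hc.dotProduct_mulVec_nonneg ((fun i => ((γ⁻¹ *ᵥ (J *ᵥ v)) i : ℂ)) + Complex.I • (fun i => (v i : ℂ)))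
      rw [cform γ J hsym hJ _ v, Complex.zero_le_real] at h0
      have hk := real_key γ J hsym hγinv (γ⁻¹ *ᵥ (J *ᵥ v)) v
      simp only [sub_self, Matrix.mulVec_zero, zero_dotProduct, zero_add] at hk
      simp only [star_trivial]
      linarith
end

section
/- Let n_a, n_b > 0 and k_x, k_p be real numbers, and let γ be the 4×4 real matrix in standard form with these parameters. Then the complex Hermitian matrix γ + i·J₂ is positive semidefinite if and only if both inequalities hold: (n_a·n_b - k_x²)·(n_a·n_b - k_p²) + 1 ≥ n_a² + n_b² + 2·k_x·k_p and n_a·n_b - k_x² ≥ 1. -/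
open Matrix Complex
open scoped ComplexOrder

/-- The standard form correlation matrix of a two-mode Gaussian state with
parameters `(n_a, n_b, k_x, k_p)`. -/
noncomputable def stdForm (na nb kx kp : ℝ) : Matrix (Fin 4) (Fin 4) ℝ :=
  !![na, 0, kx, 0;
     0, na, 0, kp;
     kx, 0, nb, 0;
     0, kp, 0, nb]

/-- The 4×4 standard symplectic form `J₂ = J₁ ⊕ J₁`. -/
noncomputable def J2 : Matrix (Fin 4) (Fin 4) ℝ :=
  !![0, -1, 0, 0;
     1, 0, 0, 0;
     0, 0, 0, -1;
     0, 0, 1, 0]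

private lemma cnonneg {r : ℝ} (h : (0:ℂ) ≤ (r:ℂ)) : 0 ≤ r := by
  rwa [Complex.zero_le_real] at h

private lemma form2 (a b c : ℝ) (x : Fin 2 → ℂ) :
    star x ⬝ᵥ (!![(a:ℂ), (b:ℂ); (b:ℂ), (c:ℂ)] *ᵥ x) =
      ((a * Complex.normSq (x 0) + 2*b*((starRingEnd ℂ (x 0) * x 1).re)
        + c * Complex.normSq (x 1) : ℝ) : ℂ) := by
  simp [dotProduct, Matrix.mulVec, Fin.sum_univ_two, Complex.normSq_apply]
  apply Complex.ext <;> simp [Complex.add_re, Complex.add_im, Complex.mul_re, Complex.mul_im] <;> ring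

private lemma psd2 (a b c : ℝ) :
    (!![(a:ℂ), (b:ℂ); (b:ℂ), (c:ℂ)]).PosSemidef ↔ (0 ≤ a ∧ 0 ≤ c ∧ b^2 ≤ a*c) := by
  rw [Matrix.posSemidef_iff_dotProduct_mulVec]
  constructor
  · intro h
    have ha := h.2 ![1,0]
    have hc := h.2 ![0,1]
    rw [form2] at ha hc
    simp at ha hc
    refine ⟨ha, hc, ?_⟩
    rcases eq_or_lt_of_le hc with hc0 | hc0
    · by_contra hbcon
      push_neg at hbcon
      have hb0 : b ≠ 0 := by intro h0; rw [h0] at hbcon; simp at hbcon; nlinarith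
      set t : ℝ := (a*b^2 + 1)/(2*b^2) with ht
      have hx := h.2 ![(-b : ℂ), (t : ℂ)]
      rw [form2] at hx
      have hx' := cnonneg hx
      simp [Complex.normSq_ofReal, Complex.conj_ofReal, ← Complex.ofReal_neg,
        ← Complex.ofReal_mul] at hx'
      have hb2 : (0:ℝ) < b^2 := by positivity
      rw [← hc0] at hx'
      field_simp [ht] at hx'
      have h2t : 2*t*b^2 = a*b^2+1 := by rw [ht]; field_simp
      nlinarith
    · have hx := h.2 ![(c : ℂ), (-b : ℂ)]
      rw [form2] at hx
      have hx' := cnonneg hx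
      simp [Complex.normSq_ofReal, Complex.conj_ofReal, ← Complex.ofReal_neg,
        ← Complex.ofReal_mul] at hx'
      nlinarith
  · rintro ⟨ha, hc, hb⟩
    refine ⟨?_, ?_⟩
    · ext i j
      fin_cases i <;> fin_cases j <;> simp [Matrix.conjTranspose_apply]
    · intro x
      rw [form2, Complex.zero_le_real]
      have h1 : ((starRingEnd ℂ (x 0) * x 1).re)^2 ≤ Complex.normSq (x 0) * Complex.normSq (x 1) := by
        have h2 := Complex.re_sq_le_normSq (starRingEnd ℂ (x 0) * x 1)
        rw [Complex.normSq_mul, Complex.normSq_conj] at h2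
        rw [sq]; exact h2
      have hu : 0 ≤ Complex.normSq (x 0) := Complex.normSq_nonneg _
      have hv : 0 ≤ Complex.normSq (x 1) := Complex.normSq_nonneg _
      set u := Complex.normSq (x 0)
      set v := Complex.normSq (x 1)
      set r := (starRingEnd ℂ (x 0) * x 1).re
      have k1 : 4*(b^2)*(r^2) ≤ 4*(a*c)*(u*v) := by
        nlinarith [mul_nonneg (sub_nonneg.2 hb) (sq_nonneg r),
          mul_nonneg (mul_nonneg ha hc) (sub_nonneg.2 h1)]
      have k2 : 4*(a*c)*(u*v) ≤ (a*u + c*v)^2 := by nlinarith [sq_nonneg (a*u - c*v)]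
      have k3 : 0 ≤ a*u + c*v := by positivity
      nlinarith [k1, k2, k3, sq_nonneg (a*u + c*v + 2*b*r)]

private lemma normSq_combo (a b : ℝ) (x0 x1 : ℂ) :
    Complex.normSq ((a:ℂ)*x0 + (b:ℂ)*x1) =
      a^2 * Complex.normSq x0 + 2*a*b*((starRingEnd ℂ x0 * x1).re) + b^2 * Complex.normSq x1 := by
  simp [Complex.normSq_apply, Complex.add_re, Complex.add_im, Complex.mul_re, Complex.mul_im]
  ring

private lemma posdef2 (a b c : ℝ) (ha : 0 < a) (hd : 0 < a*c - b^2) :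
    (!![(a:ℂ), (b:ℂ); (b:ℂ), (c:ℂ)]).PosDef := by
  rw [Matrix.posDef_iff_dotProduct_mulVec]
  refine ⟨?_, fun x hx => ?_⟩
  · ext i j
    fin_cases i <;> fin_cases j <;> simp [Matrix.conjTranspose_apply]
  · rw [form2]
    rw [show (0:ℂ) = ((0:ℝ):ℂ) from rfl, Complex.real_lt_real]
    set u := Complex.normSq (x 0)
    set v := Complex.normSq (x 1)
    set r := (starRingEnd ℂ (x 0) * x 1).re with hr
    by_cases h1 : x 1 = 0
    · have h0 : x 0 ≠ 0 := by
        intro h0; apply hx; ext i; fin_cases i <;> simp [h0, h1]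
      have hu : 0 < u := Complex.normSq_pos.2 h0
      have hv : v = 0 := by simp [v, h1]
      have hr0 : r = 0 := by simp [hr, h1]
      rw [hv, hr0]; nlinarith
    · have hv : 0 < v := Complex.normSq_pos.2 h1
      have key : a * (a * u + 2*b*r + c * v) =
          Complex.normSq ((a:ℂ)*(x 0) + (b:ℂ)*(x 1)) + (a*c - b^2) * v := by
        rw [normSq_combo]; ring
      nlinarith [Complex.normSq_nonneg ((a:ℂ)*(x 0) + (b:ℂ)*(x 1))]

/-- reindexing equivalence putting (x1,x2) and (p1,p2) blocks together. -/
private def eqv : (Fin 2 ⊕ Fin 2) ≃ Fin 4 where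
  toFun := Sum.elim ![0, 2] ![1, 3]
  invFun := ![Sum.inl 0, Sum.inr 0, Sum.inl 1, Sum.inr 1]
  left_inv := by decide
  right_inv := by decide

set_option maxHeartbeats 1000000 in
private lemma arith (na nb kx kp : ℝ) (hna : 0 < na) (hnb : 0 < nb)
    (hd : 0 < na*nb - kx^2) :
    (0 ≤ na - nb/(na*nb - kx^2) ∧ 0 ≤ nb - na/(na*nb - kx^2) ∧
      (kp + kx/(na*nb - kx^2))^2 ≤ (na - nb/(na*nb - kx^2))*(nb - na/(na*nb - kx^2))) ↔
    ((na * nb - kx ^ 2) * (na * nb - kp ^ 2) + 1 ≥ na ^ 2 + nb ^ 2 + 2 * kx * kp ∧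
        na * nb - kx ^ 2 ≥ 1) := by
  have hd0 : na*nb - kx^2 ≠ 0 := ne_of_gt hd
  have e1 : na - nb/(na*nb - kx^2) = (na*(na*nb - kx^2) - nb)/(na*nb - kx^2) := by
    field_simp
  have e2 : nb - na/(na*nb - kx^2) = (nb*(na*nb - kx^2) - na)/(na*nb - kx^2) := by
    rw [eq_div_iff hd0, sub_mul, div_mul_cancel₀ _ hd0]
  have e3 : kp + kx/(na*nb - kx^2) = (kp*(na*nb - kx^2) + kx)/(na*nb - kx^2) := by
    field_simp
  set d := na*nb - kx^2 with hdd
  have key : (na*d - nb)*(nb*d - na) - (kp*d + kx)^2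
      = d*((na*nb - kp^2)*d - (na^2+nb^2+2*kx*kp) + 1) := by
    rw [hdd]; ring
  rw [e1, e2, e3, le_div_iff₀ hd, le_div_iff₀ hd, div_pow, div_mul_div_comm,
    div_le_div_iff₀ (by positivity) (by positivity), zero_mul]
  constructor
  · rintro ⟨A1, A2, A3⟩
    have A3' : (kp*d + kx)^2 ≤ (na*d - nb)*(nb*d - na) := by
      nlinarith [mul_pos hd hd]
    constructor
    · nlinarith [A3', key, hd]
    · nlinarith [mul_nonneg A1 hd.le, mul_nonneg A2 hd.le, mul_pos hna hd, mul_pos hnb hd]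
  · rintro ⟨C1, C2⟩
    have hE : 0 ≤ (na*nb - kp^2)*d - (na^2+nb^2+2*kx*kp) + 1 := by nlinarith [C1]
    have A3' : (kp*d + kx)^2 ≤ (na*d - nb)*(nb*d - na) := by
      nlinarith [mul_nonneg (le_of_lt hd) hE]
    have h1 : 0 ≤ (na*d - nb)*(nb*d - na) := le_trans (sq_nonneg _) A3'
    have A1 : 0 ≤ na*d - nb := by
      by_contra hcon
      push_neg at hcon
      have h5 : nb*d ≤ na := by nlinarith [h1]
      nlinarith [mul_nonneg (by linarith : (0:ℝ) ≤ d - 1) hna.le,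
        mul_nonneg (by linarith : (0:ℝ) ≤ d - 1) hnb.le]
    have A2 : 0 ≤ nb*d - na := by
      by_contra hcon
      push_neg at hcon
      have h5 : na*d ≤ nb := by nlinarith [h1]
      nlinarith [mul_nonneg (by linarith : (0:ℝ) ≤ d - 1) hna.le,
        mul_nonneg (by linarith : (0:ℝ) ≤ d - 1) hnb.le]
    exact ⟨A1, A2, by nlinarith [mul_pos hd hd]⟩

private lemma formneg (na nb kx kp t : ℝ) :
    star ![((t*kx:ℝ):ℂ), Complex.I*((kx:ℝ):ℂ), ((-(t*na):ℝ):ℂ), -(Complex.I*((na:ℝ):ℂ))] ⬝ᵥ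
      (((stdForm na nb kx kp).map (Complex.ofReal) + Complex.I • J2.map (Complex.ofReal)) *ᵥ
        ![((t*kx:ℝ):ℂ), Complex.I*((kx:ℝ):ℂ), ((-(t*na):ℝ):ℂ), -(Complex.I*((na:ℝ):ℂ))]) =
      (((na*(na*nb - kx^2))*t^2 + 2*(kx^2+na^2)*t + (na*kx^2 - 2*na*kx*kp + na^2*nb) : ℝ):ℂ) := by
  simp [stdForm, J2, dotProduct, Matrix.mulVec, Fin.sum_univ_four, Matrix.map_apply,
    Matrix.add_apply, Matrix.smul_apply, Complex.star_def, _root_.map_mul, Complex.conj_ofReal,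
    Complex.conj_I, Matrix.vecHead, Matrix.vecTail]
  apply Complex.ext <;>
    simp [Complex.add_re, Complex.add_im, Complex.mul_re, Complex.mul_im,
      Complex.I_re, Complex.I_im, Complex.ofReal_re, Complex.ofReal_im,
      ← Complex.ofReal_pow] <;> ring

theorem stmt1 (na nb kx kp : ℝ) (hna : 0 < na) (hnb : 0 < nb) :
    ((stdForm na nb kx kp).map (Complex.ofReal) + Complex.I • J2.map (Complex.ofReal)).PosSemidef ↔
      ((na * nb - kx ^ 2) * (na * nb - kp ^ 2) + 1 ≥ na ^ 2 + nb ^ 2 + 2 * kx * kp ∧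
        na * nb - kx ^ 2 ≥ 1) := by
  by_cases hd : 0 < na*nb - kx^2
  · -- main case: Schur complement reduction
    have hd0 : na*nb - kx^2 ≠ 0 := ne_of_gt hd
    have hdc0 : ((na:ℂ)*(nb:ℂ) - (kx:ℂ)^2) ≠ 0 := by
      have := Complex.ofReal_ne_zero.2 hd0
      push_cast at this
      convert this using 2 <;> norm_num
    set X : Matrix (Fin 2) (Fin 2) ℂ := !![(na:ℂ), (kx:ℂ); (kx:ℂ), (nb:ℂ)] with hX
    set B : Matrix (Fin 2) (Fin 2) ℂ := !![-Complex.I, 0; 0, -Complex.I] with hB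
    set P : Matrix (Fin 2) (Fin 2) ℂ := !![(na:ℂ), (kp:ℂ); (kp:ℂ), (nb:ℂ)] with hP
    have h1 : (((stdForm na nb kx kp).map (Complex.ofReal)
        + Complex.I • J2.map (Complex.ofReal))).submatrix eqv eqv = fromBlocks X B Bᴴ P := by
      ext i j
      rcases i with i | i <;> rcases j with j | j <;>
        fin_cases i <;> fin_cases j <;>
          simp [eqv, stdForm, J2, hX, hB, hP, fromBlocks, Matrix.submatrix_apply,
            Matrix.conjTranspose_apply, Matrix.map_apply, Matrix.add_apply,
            Matrix.vecHead, Matrix.vecTail]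
    have hXpd : X.PosDef := posdef2 na kx nb hna (by nlinarith)
    set Xi : Matrix (Fin 2) (Fin 2) ℂ :=
      !![((nb/(na*nb - kx^2) : ℝ):ℂ), ((-(kx/(na*nb - kx^2)) : ℝ):ℂ);
         ((-(kx/(na*nb - kx^2)) : ℝ):ℂ), ((na/(na*nb - kx^2) : ℝ):ℂ)] with hXi
    have hXiX : Xi * X = 1 := by
      ext i j
      fin_cases i <;> fin_cases j <;>
        · simp [hXi, hX, Matrix.mul_apply, Fin.sum_univ_two]
          push_cast
          field_simp [show (nb:ℂ)*na - (kx:ℂ)^2 ≠ 0 by rw [mul_comm]; exact hdc0]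
          ring
    haveI : Invertible X := invertibleOfLeftInverse _ _ hXiX
    have hXinv : X⁻¹ = Xi := Matrix.inv_eq_left_inv hXiX
    have hSchur : P - Bᴴ * X⁻¹ * B =
        !![((na - nb/(na*nb - kx^2) : ℝ):ℂ), ((kp + kx/(na*nb - kx^2) : ℝ):ℂ);
           ((kp + kx/(na*nb - kx^2) : ℝ):ℂ), ((nb - na/(na*nb - kx^2) : ℝ):ℂ)] := by
      rw [hXinv]
      ext i j
      fin_cases i <;> fin_cases j
      all_goals simp [hXi, hB, hP, Matrix.mul_apply, Matrix.sub_apply, Fin.sum_univ_two,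
            Matrix.conjTranspose_apply]
      all_goals push_cast
      all_goals field_simp
      · linear_combination (nb:ℂ) * Complex.I_sq
      · linear_combination (-(kx:ℂ)) * Complex.I_sq
      · linear_combination (-(kx:ℂ)) * Complex.I_sq
      · linear_combination (na:ℂ)*((nb:ℂ)*na-(kx:ℂ)^2)⁻¹ * Complex.I_sq
    rw [← Matrix.posSemidef_submatrix_equiv eqv, h1,
      Matrix.PosDef.fromBlocks₁₁ B P hXpd, hSchur, psd2]
    exact arith na nb kx kp hna hnb hd
  · -- degenerate case: both sides false
    push_neg at hd
    constructor
    · intro h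
      exfalso
      obtain ⟨t, ht⟩ : ∃ t : ℝ,
          t = -((na*kx^2 - 2*na*kx*kp + na^2*nb)+1)/(2*(kx^2+na^2)) := ⟨_, rfl⟩
      have hz := (Matrix.posSemidef_iff_dotProduct_mulVec.1 h).2 ![((t*kx:ℝ):ℂ), Complex.I*((kx:ℝ):ℂ), ((-(t*na):ℝ):ℂ),
        -(Complex.I*((na:ℝ):ℂ))]
      rw [formneg, Complex.zero_le_real] at hz
      have hs0 : (0:ℝ) < kx^2 + na^2 := by positivity
      have h2st : 2*(kx^2+na^2)*t = -((na*kx^2 - 2*na*kx*kp + na^2*nb)+1) := by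
        rw [ht]; field_simp
      have hq : na*(na*nb - kx^2) ≤ 0 := by nlinarith
      nlinarith [hz, h2st, mul_nonneg (sq_nonneg t) (neg_nonneg.2 hq)]
    · rintro ⟨_, h2⟩
      linarith
end

section
/- Let n_a, n_b > 0 and k_x, k_p be real numbers satisfying (n_a·n_b - k_x²)·(n_a·n_b - k_p²) + 1 ≥ n_a² + n_b² + 2·k_x·k_p and n_a·n_b - k_x² ≥ 1, and let γ be the 4×4 standard form matrix with these parameters. Let J̃ = J₁ ⊕ (-J₁) be the partially transposed symplectic form. Then the complex Hermitian matrix γ + i·J̃ fails to be positive semidefinite if and only if (n_a·n_b - k_x²)·(n_a·n_b - k_p²) + 1 < n_a² + n_b² - 2·k_x·k_p. -/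
open Matrix Complex
open scoped ComplexOrder

/-- The partially transposed symplectic form `J̃ = J₁ ⊕ (-J₁)`. -/
noncomputable def J2tilde : Matrix (Fin 4) (Fin 4) ℝ :=
  !![0, -1, 0, 0;
     1, 0, 0, 0;
     0, 0, 0, 1;
     0, 0, -1, 0]

private lemma detShift (na nb kx kp μ : ℝ) :
    (!![(na:ℂ) - μ, -Complex.I, kx, 0;
        Complex.I, (na:ℂ) - μ, 0, kp;
        (kx:ℂ), 0, (nb:ℂ) - μ, Complex.I;
        0, (kp:ℂ), -Complex.I, (nb:ℂ) - μ]).det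
    = Complex.ofReal (μ^4 - (2*na+2*nb)*μ^3
        + (na^2+nb^2+4*na*nb-kx^2-kp^2-2)*μ^2
        - ((na+nb)*(2*na*nb-kx^2-kp^2-2))*μ
        + ((na*nb-kx^2)*(na*nb-kp^2)+1-na^2-nb^2+2*kx*kp)) := by
  simp [Matrix.det_succ_row_zero, Fin.sum_univ_succ, Fin.succAbove,
    Complex.ext_iff]
  norm_num [pow_succ, Complex.ext_iff]
  ring

private lemma auxY (na nb kx kp : ℝ) (hna : 0 < na) (hnb : 0 < nb)
    (hphys1 : (na * nb - kx ^ 2) * (na * nb - kp ^ 2) + 1 ≥ na ^ 2 + nb ^ 2 + 2 * kx * kp)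
    (hphys2 : na * nb - kx ^ 2 ≥ 1)
    (hD : (na * nb - kx ^ 2) * (na * nb - kp ^ 2) + 1 ≥ na ^ 2 + nb ^ 2 - 2 * kx * kp) :
    na * nb - kp ^ 2 ≥ 1 := by
  by_contra h
  push_neg at h
  nlinarith [sq_nonneg (na - nb), sq_nonneg kx, sq_nonneg kp,
    mul_nonneg (by linarith : (0:ℝ) ≤ na * nb - kx ^ 2 - 1)
      (by linarith : (0:ℝ) ≤ 1 - (na * nb - kp ^ 2))]

set_option maxHeartbeats 1000000 in
theorem stmt2 (na nb kx kp : ℝ) (hna : 0 < na) (hnb : 0 < nb)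
    (hphys1 : (na * nb - kx ^ 2) * (na * nb - kp ^ 2) + 1 ≥ na ^ 2 + nb ^ 2 + 2 * kx * kp)
    (hphys2 : na * nb - kx ^ 2 ≥ 1) :
    ¬ ((stdForm na nb kx kp).map (Complex.ofReal)
        + Complex.I • J2tilde.map (Complex.ofReal)).PosSemidef ↔
      (na * nb - kx ^ 2) * (na * nb - kp ^ 2) + 1 < na ^ 2 + nb ^ 2 - 2 * kx * kp := by
  have hM : (stdForm na nb kx kp).map (Complex.ofReal)
        + Complex.I • J2tilde.map (Complex.ofReal) =
      !![(na:ℂ), -Complex.I, kx, 0;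
         Complex.I, (na:ℂ), 0, kp;
         (kx:ℂ), 0, (nb:ℂ), Complex.I;
         0, (kp:ℂ), -Complex.I, (nb:ℂ)] := by
    ext i j
    fin_cases i <;> fin_cases j <;>
      simp [stdForm, J2tilde, Matrix.vecHead, Matrix.vecTail]
  rw [hM]
  set A : Matrix (Fin 4) (Fin 4) ℂ :=
      !![(na:ℂ), -Complex.I, kx, 0;
         Complex.I, (na:ℂ), 0, kp;
         (kx:ℂ), 0, (nb:ℂ), Complex.I;
         0, (kp:ℂ), -Complex.I, (nb:ℂ)] with hA
  have hherm : A.IsHermitian := by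
    ext i j
    fin_cases i <;> fin_cases j <;>
      simp [hA, Matrix.conjTranspose_apply, Complex.ext_iff]
  have hsub : ∀ μ : ℝ, A - (μ:ℂ) • 1 =
      !![(na:ℂ) - μ, -Complex.I, kx, 0;
        Complex.I, (na:ℂ) - μ, 0, kp;
        (kx:ℂ), 0, (nb:ℂ) - μ, Complex.I;
        0, (kp:ℂ), -Complex.I, (nb:ℂ) - μ] := by
    intro μ
    ext i j
    fin_cases i <;> fin_cases j <;> simp [hA, Matrix.one_apply]
  have hdetA : A.det = Complex.ofReal
      ((na*nb-kx^2)*(na*nb-kp^2)+1-na^2-nb^2+2*kx*kp) := by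
    have h0 : A = A - ((0:ℝ):ℂ) • 1 := by simp
    conv_lhs => rw [h0, hsub 0, detShift]
    norm_num
  rw [lt_iff_not_ge, not_iff_not]
  constructor
  · -- PSD → Δ̃ ≥ 0
    intro hpsd
    have hev : ∀ i, 0 ≤ hpsd.1.eigenvalues i := hpsd.eigenvalues_nonneg
    have hprod : (0:ℝ) ≤ ∏ i, hpsd.1.eigenvalues i :=
      Finset.prod_nonneg fun i _ => hev i
    have hdet2 := hpsd.1.det_eq_prod_eigenvalues
    rw [hdetA] at hdet2
    have : ((na*nb-kx^2)*(na*nb-kp^2)+1-na^2-nb^2+2*kx*kp : ℝ)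
        = ∏ i, hpsd.1.eigenvalues i := by
      apply Complex.ofReal_injective
      rw [hdet2, Complex.ofReal_prod]
      rfl
    have : (0:ℝ) ≤ (na*nb-kx^2)*(na*nb-kp^2)+1-na^2-nb^2+2*kx*kp := by
      rw [this]; exact hprod
    linarith
  · -- Δ̃ ≥ 0 → PSD
    intro hD
    have hD' : (na * nb - kx ^ 2) * (na * nb - kp ^ 2) + 1
        ≥ na ^ 2 + nb ^ 2 - 2 * kx * kp := hD
    apply hherm.posSemidef_iff_eigenvalues_nonneg.mpr
    intro i
    by_contra hneg
    push_neg at hneg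
    rw [Pi.zero_apply] at hneg
    set μ : ℝ := hherm.eigenvalues i with hμ
    -- the eigenvector
    have hmv : (A - (μ:ℂ) • 1) *ᵥ ⇑(hherm.eigenvectorBasis i) = 0 := by
      rw [Matrix.sub_mulVec, hherm.mulVec_eigenvectorBasis, Matrix.smul_mulVec,
        Matrix.one_mulVec]
      funext x
      simp [Complex.real_smul, hμ]
    have hvne : ⇑(hherm.eigenvectorBasis i) ≠ 0 := by
      intro h
      apply hherm.eigenvectorBasis.orthonormal.ne_zero i
      ext x
      exact congrFun h x
    have hdet0 : (A - (μ:ℂ) • 1).det = 0 :=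
      Matrix.exists_mulVec_eq_zero_iff.mp ⟨_, hvne, hmv⟩
    rw [hsub μ, detShift na nb kx kp μ] at hdet0
    rw [Complex.ofReal_eq_zero] at hdet0
    -- real inequalities
    have hy : na * nb - kp ^ 2 ≥ 1 := auxY na nb kx kp hna hnb hphys1 hphys2 hD'
    have hs : 2*na*nb - kx^2 - kp^2 - 2 ≥ 0 := by linarith
    have he2 : na^2+nb^2+4*na*nb-kx^2-kp^2-2 ≥ 0 := by nlinarith [sq_nonneg (na - nb)]
    have he3 : (na+nb)*(2*na*nb-kx^2-kp^2-2) ≥ 0 := by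
      apply mul_nonneg <;> linarith
    have he4 : (na*nb-kx^2)*(na*nb-kp^2)+1-na^2-nb^2+2*kx*kp ≥ 0 := by linarith
    have hμ2 : 0 < μ^2 := by nlinarith
    have hμ3 : μ^3 < 0 := by nlinarith
    have hμ4 : 0 < μ^4 := by nlinarith
    have t1 : 0 < (2*na+2*nb) * (-μ^3) :=
      mul_pos (by linarith) (by linarith)
    have t2 : 0 ≤ (na^2+nb^2+4*na*nb-kx^2-kp^2-2) * μ^2 := mul_nonneg he2 hμ2.le
    have t3 : 0 ≤ ((na+nb)*(2*na*nb-kx^2-kp^2-2)) * (-μ) :=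
      mul_nonneg he3 (by linarith)
    nlinarith [t1, t2, t3, hμ4, hdet0]
end

section
/- Let n > 0 and k_x ≥ |k_p| be real numbers satisfying n² - k_x² ≥ 1 and the inseparability condition (n² - k_x²)·(n² - k_p²) + 1 < 2·n² - 2·k_x·k_p. Then (n - k_x)·(n + k_p) < 1. -/
/-!
With `a = n - kx`, `b = n + kx`, `c = n + kp`, `d = n - kp` one has `n² - kx² = ab`,
`n² - kp² = cd` and `2n² - 2 kx kp = ac + bd`, so the inseparability condition reads
`(ac - 1)(bd - 1) < 0`: exactly one of `ac`, `bd` lies below `1`. Since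
`bd - ac = 2n(kx - kp) ≥ 0`, it is `ac`.
-/

lemma lt_one_of_mul_sub_one_neg_of_le {x y : ℝ} (h : (x - 1) * (y - 1) < 0) (hxy : x ≤ y) :
    x < 1 := by
  by_contra! hx
  exact h.not_ge (mul_nonneg (by linarith) (by linarith))

lemma inseparability_gap_eq_mul (n kx kp : ℝ) :
    (n ^ 2 - kx ^ 2) * (n ^ 2 - kp ^ 2) + 1 - (2 * n ^ 2 - 2 * kx * kp) =
      ((n - kx) * (n + kp) - 1) * ((n + kx) * (n - kp) - 1) := by
  ring

lemma sub_mul_add_le_add_mul_sub {n kx kp : ℝ} (hn : 0 ≤ n) (hk : kp ≤ kx) :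
    (n - kx) * (n + kp) ≤ (n + kx) * (n - kp) := by
  nlinarith [mul_nonneg hn (sub_nonneg.mpr hk)]

theorem stmt4_general (n kx kp : ℝ) (hn : 0 < n) (hk : |kp| ≤ kx)
    (hinsep : (n ^ 2 - kx ^ 2) * (n ^ 2 - kp ^ 2) + 1 < 2 * n ^ 2 - 2 * kx * kp) :
    (n - kx) * (n + kp) < 1 := by
  refine lt_one_of_mul_sub_one_neg_of_le ?_
    (sub_mul_add_le_add_mul_sub hn.le ((le_abs_self kp).trans hk))
  rw [← inseparability_gap_eq_mul]
  exact sub_neg.mpr hinsep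

theorem stmt4 (n kx kp : ℝ) (hn : 0 < n) (hk : |kp| ≤ kx)
    (hphys : n ^ 2 - kx ^ 2 ≥ 1)
    (hinsep : (n ^ 2 - kx ^ 2) * (n ^ 2 - kp ^ 2) + 1 < 2 * n ^ 2 - 2 * kx * kp) :
    (n - kx) * (n + kp) < 1 :=
  stmt4_general n kx kp hn hk hinsep
end

section
/- Let n > 0 and k_x ≥ |k_p| be real numbers with n - k_x > 0, n + k_p > 0 and (n - k_x)·(n + k_p) < 1. Then there exists r₀ > 0 such that for all r ≥ r₀, writing c = cosh(2r) and s = sinh(2r), one has ((n + c)² - (k_x + s)²)·((n + c)² - (k_p - s)²) < 4·(n + c)². -/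
/-!
Put `y = exp (-2r)`, so that `cosh (2r) ± sinh (2r)` is `1/y` or `y`. Each difference of squares
then factors, and multiplying the inequality by `y²` turns it into `rescaledGap n kx kp y < 0` for a
polynomial whose value at `y = 0` is `(n - kx)(n + kp) - 1 < 0`. Since `y → 0` as `r → ∞`, the
inequality holds for all large `r` by continuity.
-/

open Real Filter Topology

def rescaledGap (n kx kp y : ℝ) : ℝ :=
  (n - kx + y) * (n + kp + y) * ((n + kx) * y + 1) * ((n - kp) * y + 1) - (y ^ 2 + 2 * n * y + 1) ^ 2

lemma continuous_rescaledGap (n kx kp : ℝ) : Continuous (rescaledGap n kx kp) := by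
  unfold rescaledGap
  fun_prop

lemma rescaledGap_zero (n kx kp : ℝ) : rescaledGap n kx kp 0 = (n - kx) * (n + kp) - 1 := by
  simp [rescaledGap]

lemma gap_eq_exp_sq_mul_rescaledGap (n kx kp t : ℝ) :
    ((n + cosh t) ^ 2 - (kx + sinh t) ^ 2) * ((n + cosh t) ^ 2 - (kp - sinh t) ^ 2)
        - 4 * (n + cosh t) ^ 2 = exp t ^ 2 * rescaledGap n kx kp (exp (-t)) := by
  rw [cosh_eq, sinh_eq, exp_neg, rescaledGap]
  field_simp
  ring

lemma eventually_rescaledGap_exp_neg_neg {n kx kp : ℝ} (h : (n - kx) * (n + kp) < 1) :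
    ∀ᶠ t in atTop, rescaledGap n kx kp (exp (-t)) < 0 := by
  have hlim : Tendsto (fun t ↦ rescaledGap n kx kp (exp (-t))) atTop
      (𝓝 (rescaledGap n kx kp 0)) :=
    ((continuous_rescaledGap n kx kp).tendsto 0).comp tendsto_exp_neg_atTop_nhds_zero
  exact hlim.eventually (gt_mem_nhds (by rw [rescaledGap_zero]; linarith))

theorem stmt5_general (n kx kp : ℝ) (h3 : (n - kx) * (n + kp) < 1) :
    ∃ r₀ > (0 : ℝ), ∀ r ≥ r₀,
      ((n + Real.cosh (2 * r)) ^ 2 - (kx + Real.sinh (2 * r)) ^ 2) *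
        ((n + Real.cosh (2 * r)) ^ 2 - (kp - Real.sinh (2 * r)) ^ 2) <
      4 * (n + Real.cosh (2 * r)) ^ 2 := by
  have hev : ∀ᶠ r in atTop, rescaledGap n kx kp (exp (-(2 * r))) < 0 :=
    tendsto_id.const_mul_atTop two_pos |>.eventually (eventually_rescaledGap_exp_neg_neg h3)
  obtain ⟨r₁, hr₁⟩ := eventually_atTop.1 hev
  refine ⟨max r₁ 1, by positivity, fun r hr ↦ ?_⟩
  have hgap := gap_eq_exp_sq_mul_rescaledGap n kx kp (2 * r)
  have hneg := mul_neg_of_pos_of_neg (pow_pos (exp_pos (2 * r)) 2) (hr₁ r (le_of_max_le_left hr))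
  linarith

theorem stmt5 (n kx kp : ℝ) (hn : 0 < n) (hk : |kp| ≤ kx)
    (h1 : 0 < n - kx) (h2 : 0 < n + kp) (h3 : (n - kx) * (n + kp) < 1) :
    ∃ r₀ > (0 : ℝ), ∀ r ≥ r₀,
      ((n + Real.cosh (2 * r)) ^ 2 - (kx + Real.sinh (2 * r)) ^ 2) *
        ((n + Real.cosh (2 * r)) ^ 2 - (kp - Real.sinh (2 * r)) ^ 2) <
      4 * (n + Real.cosh (2 * r)) ^ 2 :=
  stmt5_general n kx kp h3
end

section
/- Let N_a, N_b > 0 and K_x ≥ |K_p| be real numbers, let θ ∈ [0, π/2), and set c = cos θ, s = sin θ, ν = s²·N_b + c², D_x = N_a·N_b - K_x². Define the 2×2 matrices Ã = (1/ν)·diag(c²·N_a + s²·D_x, c²·N_a + s²·N_a·N_b), B̃ = (1/ν)·diag(N_b, (c²·N_b + s²)·ν), C̃ = (1/ν)·diag(c·K_x, c·K_p·ν), and let γ̃ be the 4×4 symmetric matrix with diagonal blocks Ã, B̃ and off-diagonal block C̃. If tan²θ = (N_a² - N_b²)/(N_b - D_x·N_a) (with N_b - D_x·N_a > 0), then det Ã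 = det B̃. -/
open Real Matrix

/-- The block `Ã` of the Wigner correlation matrix after the beam-splitter +
homodyne measurement symmetrization step. -/
noncomputable def tilA (Na Nb Kx θ : ℝ) : Matrix (Fin 2) (Fin 2) ℝ :=
  (1 / (Real.sin θ ^ 2 * Nb + Real.cos θ ^ 2)) •
    !![Real.cos θ ^ 2 * Na + Real.sin θ ^ 2 * (Na * Nb - Kx ^ 2), 0;
       0, Real.cos θ ^ 2 * Na + Real.sin θ ^ 2 * (Na * Nb)]

/-- The block `B̃`. -/
noncomputable def tilB (Nb θ : ℝ) : Matrix (Fin 2) (Fin 2) ℝ :=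
  (1 / (Real.sin θ ^ 2 * Nb + Real.cos θ ^ 2)) •
    !![Nb, 0;
       0, (Real.cos θ ^ 2 * Nb + Real.sin θ ^ 2) * (Real.sin θ ^ 2 * Nb + Real.cos θ ^ 2)]

/-- The block `C̃`. -/
noncomputable def tilC (Nb Kx Kp θ : ℝ) : Matrix (Fin 2) (Fin 2) ℝ :=
  (1 / (Real.sin θ ^ 2 * Nb + Real.cos θ ^ 2)) •
    !![Real.cos θ * Kx, 0;
       0, Real.cos θ * Kp * (Real.sin θ ^ 2 * Nb + Real.cos θ ^ 2)]

/-- The full 4×4 Wigner correlation matrix `γ̃` with diagonal blocks `Ã`, `B̃` and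
off-diagonal block `C̃`. -/
noncomputable def gammaTilde (Na Nb Kx Kp θ : ℝ) : Matrix (Fin 2 ⊕ Fin 2) (Fin 2 ⊕ Fin 2) ℝ :=
  Matrix.fromBlocks (tilA Na Nb Kx θ) (tilC Nb Kx Kp θ) (tilC Nb Kx Kp θ)ᵀ (tilB Nb θ)

theorem stmt8 (Na Nb Kx Kp θ : ℝ) (hNa : 0 < Na) (hNb : 0 < Nb) (hK : |Kp| ≤ Kx)
    (hθ : θ ∈ Set.Ico (0 : ℝ) (Real.pi / 2))
    (hden : 0 < Nb - (Na * Nb - Kx ^ 2) * Na)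
    (htan : Real.tan θ ^ 2 = (Na ^ 2 - Nb ^ 2) / (Nb - (Na * Nb - Kx ^ 2) * Na)) :
    (tilA Na Nb Kx θ).det = (tilB Nb θ).det := by
  set s := Real.sin θ
  set c := Real.cos θ
  have hc : 0 < c := Real.cos_pos_of_mem_Ioo
    ⟨by linarith [Real.pi_pos, hθ.1], hθ.2⟩
  have hpy : s ^ 2 + c ^ 2 = 1 := Real.sin_sq_add_cos_sq θ
  have htan' : Real.tan θ = s / c := Real.tan_eq_sin_div_cos θ
  have hcond : s ^ 2 * (Nb - (Na * Nb - Kx ^ 2) * Na) = c ^ 2 * (Na ^ 2 - Nb ^ 2) := by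
    have h1 : (s / c) ^ 2 = (Na ^ 2 - Nb ^ 2) / (Nb - (Na * Nb - Kx ^ 2) * Na) := by
      rw [← htan']; exact htan
    field_simp at h1
    have hd : Nb - Na * (Na * Nb - Kx ^ 2) ≠ 0 := by rw [mul_comm]; exact hden.ne'
    rw [eq_div_iff hd] at h1
    linear_combination h1
  have hν : s ^ 2 * Nb + c ^ 2 > 0 := by positivity
  have hνne : s ^ 2 * Nb + c ^ 2 ≠ 0 := ne_of_gt hν
  have hc2 : c ^ 2 = 1 - s ^ 2 := by linarith
  rw [hc2] at hcond
  have key : (c ^ 2 * Na + s ^ 2 * (Na * Nb - Kx ^ 2)) * (c ^ 2 * Na + s ^ 2 * (Na * Nb))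
      = Nb * ((c ^ 2 * Nb + s ^ 2) * (s ^ 2 * Nb + c ^ 2)) := by
    rw [hc2]
    linear_combination ((1 - Nb) * s ^ 2 - 1) * hcond
  simp only [tilA, tilB, Matrix.det_smul, Matrix.det_fin_two_of, Fintype.card_fin]
  simp only [mul_zero, zero_mul, sub_zero]
  exact congrArg (fun x => (1 / (Real.sin θ ^ 2 * Nb + Real.cos θ ^ 2)) ^ 2 * x) key
end

section
/- Let N, M ≥ 1 and let M₀ be a complex Hermitian matrix of size 2(N+M). Suppose there exists z ∈ ℂ^{2(N+M)} with z† M₀ z < 0. Then there exists z ∈ ℂ^{2(N+M)} with z† M₀ z < 0 such that, writing z = z_A ⊕ z_B with z_A ∈ ℂ^{2N} the first 2N coordinates and z_B ∈ ℂ^{2M} the last 2M coordinates, both (Re z_A)ᵀ·J_N·(Im z_A) ≠ 0 and (Re z_B)ᵀ·J_M·(Im z_B) ≠ 0. -/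
open Matrix

lemma quad_small_ne (a b : ℝ) {δ : ℝ} (hδ : 0 < δ) :
    ∃ t : ℝ, |t| < δ ∧ a + b * t - t ^ 2 ≠ 0 := by
  by_contra hcon
  push_neg at hcon
  have h1 := hcon (δ/2) (by rw [abs_of_pos (by linarith)]; linarith)
  have h2 := hcon (δ/3) (by rw [abs_of_pos (by linarith)]; linarith)
  have h3 := hcon (δ/4) (by rw [abs_of_pos (by linarith)]; linarith)
  nlinarith [sq_nonneg δ, mul_pos hδ hδ]

lemma pairing_expand (n : ℕ) (hn : 1 ≤ n) (x₀ y₀ : Fin (2*n) → ℝ) (t : ℝ) :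
    (x₀ + t • (Pi.single (⟨0, by omega⟩ : Fin (2*n)) (1:ℝ) : Fin (2*n) → ℝ)) ⬝ᵥ
      (Jmat n).mulVec (y₀ + t • (Pi.single (⟨1, by omega⟩ : Fin (2*n)) (1:ℝ) : Fin (2*n) → ℝ))
    = (x₀ ⬝ᵥ (Jmat n).mulVec y₀) +
      (x₀ ⬝ᵥ (Jmat n).mulVec (Pi.single (⟨1, by omega⟩ : Fin (2*n)) (1:ℝ) : Fin (2*n) → ℝ) +
        (Pi.single (⟨0, by omega⟩ : Fin (2*n)) (1:ℝ) : Fin (2*n) → ℝ) ⬝ᵥ (Jmat n).mulVec y₀) * t - t ^ 2 := by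
  have hJ : Jmat n ⟨0, by omega⟩ ⟨1, by omega⟩ = -1 := by
    simp [Jmat]
  rw [mulVec_add, mulVec_smul, dotProduct_add, add_dotProduct, add_dotProduct,
    dotProduct_smul, smul_dotProduct, dotProduct_smul, smul_dotProduct]
  simp only [mulVec_single, single_dotProduct, mul_one, one_mul, smul_eq_mul, hJ]
  simp only [Pi.smul_apply, Matrix.col, transpose_apply, op_smul_eq_mul, mul_one, hJ]
  ring

lemma exists_good (n : ℕ) (hn : 1 ≤ n) (x₀ y₀ : Fin (2*n) → ℝ) {δ : ℝ} (hδ : 0 < δ) :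
    ∃ t : ℝ, |t| < δ ∧
      (x₀ + t • (Pi.single (⟨0, by omega⟩ : Fin (2*n)) (1:ℝ) : Fin (2*n) → ℝ)) ⬝ᵥ
        (Jmat n).mulVec (y₀ + t • (Pi.single (⟨1, by omega⟩ : Fin (2*n)) (1:ℝ) : Fin (2*n) → ℝ)) ≠ 0 := by
  obtain ⟨t, ht, hne⟩ := quad_small_ne (x₀ ⬝ᵥ (Jmat n).mulVec y₀)
    (x₀ ⬝ᵥ (Jmat n).mulVec (Pi.single (⟨1, by omega⟩ : Fin (2*n)) (1:ℝ) : Fin (2*n) → ℝ) +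
      (Pi.single (⟨0, by omega⟩ : Fin (2*n)) (1:ℝ) : Fin (2*n) → ℝ) ⬝ᵥ (Jmat n).mulVec y₀) hδ
  exact ⟨t, ht, by rw [pairing_expand n hn]; exact hne⟩

theorem stmt11 (N M : ℕ) (hN : 1 ≤ N) (hM : 1 ≤ M)
    (M₀ : Matrix (Fin (2 * (N + M))) (Fin (2 * (N + M))) ℂ) (hherm : M₀.IsHermitian)
    (h : ∃ z : Fin (2 * (N + M)) → ℂ, (star z ⬝ᵥ M₀.mulVec z).re < 0) :
    ∃ z : Fin (2 * (N + M)) → ℂ, (star z ⬝ᵥ M₀.mulVec z).re < 0 ∧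
      (fun i : Fin (2 * N) => (z ⟨(i : ℕ), by omega⟩).re) ⬝ᵥ
          (Jmat N).mulVec (fun i : Fin (2 * N) => (z ⟨(i : ℕ), by omega⟩).im) ≠ 0 ∧
      (fun i : Fin (2 * M) => (z ⟨2 * N + (i : ℕ), by omega⟩).re) ⬝ᵥ
          (Jmat M).mulVec (fun i : Fin (2 * M) => (z ⟨2 * N + (i : ℕ), by omega⟩).im) ≠ 0 := by
  classical
  obtain ⟨z₀, hz₀⟩ := h
  set w : ℝ → ℝ → Fin (2*(N+M)) → ℂ := fun t s i =>
    z₀ i + (if (i:ℕ) = 0 then (t:ℂ) else 0) + (if (i:ℕ) = 1 then (t:ℂ)*Complex.I else 0)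
      + (if (i:ℕ) = 2*N then (s:ℂ) else 0) + (if (i:ℕ) = 2*N+1 then (s:ℂ)*Complex.I else 0)
    with hw
  set F : ℝ × ℝ → ℝ := fun p => (star (w p.1 p.2) ⬝ᵥ M₀.mulVec (w p.1 p.2)).re with hFdef
  have hw0 : w 0 0 = z₀ := by
    funext i; simp [hw]
  have hwc : ∀ i, Continuous fun p : ℝ × ℝ => w p.1 p.2 i := by
    intro i
    simp only [hw]
    split_ifs <;> fun_prop
  have hF : Continuous F := by
    apply Complex.continuous_re.comp
    simp only [dotProduct, mulVec, Pi.star_apply]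
    apply continuous_finset_sum
    intro i _
    exact (Complex.continuous_conj.comp (hwc i)).mul
      (continuous_finset_sum _ fun j _ => continuous_const.mul (hwc j))
  have hF0 : F (0, 0) < 0 := by simpa [hFdef, hw0] using hz₀
  obtain ⟨δ, hδpos, hδ⟩ := Metric.continuousAt_iff.mp hF.continuousAt (-F (0,0)) (by linarith)
  obtain ⟨tA, htA, hneA⟩ := exists_good N hN
    (fun i : Fin (2*N) => (z₀ ⟨(i:ℕ), by omega⟩).re)
    (fun i : Fin (2*N) => (z₀ ⟨(i:ℕ), by omega⟩).im) hδpos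
  obtain ⟨tB, htB, hneB⟩ := exists_good M hM
    (fun i : Fin (2*M) => (z₀ ⟨2*N + (i:ℕ), by omega⟩).re)
    (fun i : Fin (2*M) => (z₀ ⟨2*N + (i:ℕ), by omega⟩).im) hδpos
  refine ⟨w tA tB, ?_, ?_, ?_⟩
  · have hd : dist (tA, tB) ((0:ℝ), (0:ℝ)) < δ := by
      rw [Prod.dist_eq]
      simp only [Real.dist_eq, sub_zero]
      exact max_lt htA htB
    have := hδ hd
    rw [Real.dist_eq, abs_lt] at this
    linarith [this.1, this.2]
  · have eRe : (fun i : Fin (2*N) => (w tA tB ⟨(i:ℕ), by omega⟩).re)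
        = (fun i : Fin (2*N) => (z₀ ⟨(i:ℕ), by omega⟩).re)
          + tA • (Pi.single (⟨0, by omega⟩ : Fin (2*N)) (1:ℝ) : Fin (2*N) → ℝ) := by
      funext i
      have h2 : (i:ℕ) ≠ 2*N := by have := i.isLt; omega
      have h3 : (i:ℕ) ≠ 2*N+1 := by have := i.isLt; omega
      simp [hw, h2, h3, Pi.single_apply, Fin.ext_iff, mul_ite, apply_ite Complex.re,
        apply_ite Complex.im, Complex.mul_re, Complex.mul_im]
    have eIm : (fun i : Fin (2*N) => (w tA tB ⟨(i:ℕ), by omega⟩).im)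
        = (fun i : Fin (2*N) => (z₀ ⟨(i:ℕ), by omega⟩).im)
          + tA • (Pi.single (⟨1, by omega⟩ : Fin (2*N)) (1:ℝ) : Fin (2*N) → ℝ) := by
      funext i
      have h2 : (i:ℕ) ≠ 2*N := by have := i.isLt; omega
      have h3 : (i:ℕ) ≠ 2*N+1 := by have := i.isLt; omega
      simp [hw, h2, h3, Pi.single_apply, Fin.ext_iff, mul_ite, apply_ite Complex.re,
        apply_ite Complex.im, Complex.mul_re, Complex.mul_im]
    rw [eRe, eIm]
    exact hneA
  · have eRe : (fun i : Fin (2*M) => (w tA tB ⟨2*N + (i:ℕ), by omega⟩).re)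
        = (fun i : Fin (2*M) => (z₀ ⟨2*N + (i:ℕ), by omega⟩).re)
          + tB • (Pi.single (⟨0, by omega⟩ : Fin (2*M)) (1:ℝ) : Fin (2*M) → ℝ) := by
      funext i
      have h0 : 2*N + (i:ℕ) ≠ 0 := by omega
      have h1 : 2*N + (i:ℕ) ≠ 1 := by omega
      have h2 : (2*N + (i:ℕ) = 2*N) ↔ ((i:ℕ) = 0) := by omega
      have h3 : (2*N + (i:ℕ) = 2*N+1) ↔ ((i:ℕ) = 1) := by omega
      simp [hw, h0, h1, h2, h3, Pi.single_apply, Fin.ext_iff, mul_ite, apply_ite Complex.re,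
        apply_ite Complex.im, Complex.mul_re, Complex.mul_im]
      intro hN0; exact absurd hN0 (by omega)
    have eIm : (fun i : Fin (2*M) => (w tA tB ⟨2*N + (i:ℕ), by omega⟩).im)
        = (fun i : Fin (2*M) => (z₀ ⟨2*N + (i:ℕ), by omega⟩).im)
          + tB • (Pi.single (⟨1, by omega⟩ : Fin (2*M)) (1:ℝ) : Fin (2*M) → ℝ) := by
      funext i
      have h0 : 2*N + (i:ℕ) ≠ 0 := by omega
      have h1 : 2*N + (i:ℕ) ≠ 1 := by omega
      have h2 : (2*N + (i:ℕ) = 2*N) ↔ ((i:ℕ) = 0) := by omega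
      have h3 : (2*N + (i:ℕ) = 2*N+1) ↔ ((i:ℕ) = 1) := by omega
      simp [hw, h0, h1, h2, h3, Pi.single_apply, Fin.ext_iff, mul_ite, apply_ite Complex.re,
        apply_ite Complex.im, Complex.mul_re, Complex.mul_im]
    rw [eRe, eIm]
    exact hneB
end

section
/- Let γ be a real symmetric positive definite 4×4 matrix such that γ + i·J₂ is positive semidefinite. Then there exist S_A, S_B ∈ Sp(2, ℝ) and real numbers n_a, n_b > 0 and k_x ≥ |k_p| such that (S_A ⊕ S_B)ᵀ · γ · (S_A ⊕ S_B) equals the standard form matrix ((n_a,0,k_x,0),(0,n_a,0,k_p),(k_x,0,n_b,0),(0,k_p,0,n_b)). -/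
open Matrix Complex
open scoped ComplexOrder

/-- The 2×2 symplectic form `J₁`. -/
noncomputable def J1 : Matrix (Fin 2) (Fin 2) ℝ := !![0, -1; 1, 0]

/-- Direct sum (block diagonal) of two square matrices. -/
noncomputable def dsum {a b : ℕ} (A : Matrix (Fin a) (Fin a) ℝ) (B : Matrix (Fin b) (Fin b) ℝ) :
    Matrix (Fin (a + b)) (Fin (a + b)) ℝ :=
  Matrix.reindex finSumFinEquiv finSumFinEquiv (Matrix.fromBlocks A 0 0 B)

local notation "conj'" => starRingEnd ℂ

lemma phase (z : ℂ) : ∃ μ : ℂ, ‖μ‖ = 1 ∧ z * μ = (‖z‖ : ℂ) := by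
  by_cases hz : z = 0
  · exact ⟨1, by simp, by simp [hz]⟩
  · have h0 : (‖z‖ : ℂ) ≠ 0 := by
      exact_mod_cast (norm_ne_zero_iff.mpr hz)
    refine ⟨conj' z / ‖z‖, by simp [map_div₀, hz], ?_⟩
    rw [mul_div_assoc', Complex.mul_conj']
    rw [sq, mul_div_assoc, div_self h0, mul_one]

lemma unit_sqrt (c : ℂ) (h : ‖c‖ = 1) : ∃ u : ℂ, ‖u‖ = 1 ∧ u ^ 2 = c := by
  have hc : c ≠ 0 := by intro h0; rw [h0] at h; simp at h
  refine ⟨Complex.exp (Complex.log c / 2), ?_, ?_⟩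
  · rw [Complex.norm_exp]
    have : (Complex.log c / 2).re = (Complex.log c).re / 2 := by
      simp [Complex.div_re]
    rw [this, Complex.log_re, h]
    simp
  · rw [sq, ← Complex.exp_add, add_halves, Complex.exp_log hc]

noncomputable def cmat (z w : ℂ) : Matrix (Fin 2) (Fin 2) ℝ :=
  !![z.re + w.re, -z.im + w.im; z.im + w.im, z.re - w.re]

lemma cmat_mul (z w z' w' : ℂ) :
    cmat z w * cmat z' w' =
      cmat (z * z' + w * conj' w') (z * w' + w * conj' z') := by
  simp only [cmat, Matrix.mul_fin_two]
  norm_num [Complex.ext_iff, Complex.add_re, Complex.mul_re, Complex.mul_im]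
  ring_nf
  simp only [and_self]

lemma cmat_one : cmat 1 0 = 1 := by
  simp [cmat]; ext i j; fin_cases i <;> fin_cases j <;> simp

lemma cmat_transpose (z : ℂ) : (cmat z 0)ᵀ = cmat (conj' z) 0 := by
  ext i j; fin_cases i <;> fin_cases j <;> simp [cmat]

lemma cmat_surj (M : Matrix (Fin 2) (Fin 2) ℝ) :
    M = cmat ⟨(M 0 0 + M 1 1)/2, (M 1 0 - M 0 1)/2⟩ ⟨(M 0 0 - M 1 1)/2, (M 0 1 + M 1 0)/2⟩ := by
  ext i j; fin_cases i <;> fin_cases j <;> simp [cmat] <;> ring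

lemma cmat_real (r s : ℝ) : cmat (r:ℂ) (s:ℂ) = !![r+s, 0; 0, r-s] := by
  simp [cmat]

lemma unit_mul_conj {u : ℂ} (hu : ‖u‖ = 1) : u * conj' u = 1 := by
  rw [Complex.mul_conj', hu]; norm_num

lemma rotdiag (M : Matrix (Fin 2) (Fin 2) ℝ) :
    ∃ u v kx kp, ‖u‖ = 1 ∧ ‖v‖ = 1 ∧ |kp| ≤ kx ∧
      (cmat u 0)ᵀ * M * cmat v 0 = !![kx, 0; 0, kp] := by
  obtain ⟨z, w, rfl⟩ : ∃ z w, M = cmat z w := ⟨_, _, cmat_surj M⟩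
  obtain ⟨μ, hμ, hzμ⟩ := phase z
  obtain ⟨ν, hν, hwν⟩ := phase w
  obtain ⟨u, hu, hu2⟩ := unit_sqrt (conj' (μ * ν)) (by simp [hμ, hν])
  refine ⟨u, u * μ, ‖z‖ + ‖w‖, ‖z‖ - ‖w‖,
    hu, by simp [hu, hμ], ?_, ?_⟩
  · have := norm_nonneg z; have := norm_nonneg w
    rw [abs_le]; constructor <;> linarith
  · have h1 : conj' u * z * (u * μ) = (‖z‖ : ℂ) := by
      calc conj' u * z * (u * μ) = (u * conj' u) * (z * μ) := by ring
      _ = (‖z‖ : ℂ) := by rw [unit_mul_conj hu, hzμ, one_mul]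
    have h2 : conj' u * w * conj' (u * μ) = (‖w‖ : ℂ) := by
      calc conj' u * w * conj' (u * μ)
          = conj' (u ^ 2) * (conj' μ) * w := by rw [_root_.map_mul, map_pow]; ring
      _ = (μ * conj' μ) * (ν * w) := by rw [hu2, Complex.conj_conj]; ring
      _ = (‖w‖ : ℂ) := by rw [unit_mul_conj hμ, one_mul, mul_comm, hwν]
    rw [cmat_transpose, cmat_mul, cmat_mul, ← cmat_real]
    simp only [zero_mul, add_zero, mul_zero, zero_add, map_zero]
    rw [h1, h2]

lemma sympl_det (M : Matrix (Fin 2) (Fin 2) ℝ) : Mᵀ * J1 * M = M.det • J1 := by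
  ext i j
  fin_cases i <;> fin_cases j <;>
    simp [J1, Matrix.mul_apply, Fin.sum_univ_succ, Matrix.det_fin_two] <;> ring

lemma diag_pos_of_posDef {A : Matrix (Fin 2) (Fin 2) ℝ} (hA : A.PosDef) (i : Fin 2) :
    0 < A i i := by
  have := hA.dotProduct_mulVec_pos (x := Pi.single i 1) (by
    intro h
    have := congrFun h i
    simp [Pi.single_eq_same] at this)
  simpa [dotProduct, mulVec, Pi.single_apply, Finset.sum_ite_eq] using this

lemma williamson2 (A : Matrix (Fin 2) (Fin 2) ℝ) (hA : A.PosDef) :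
    ∃ (S : Matrix (Fin 2) (Fin 2) ℝ) (a : ℝ), 0 < a ∧ Sᵀ * J1 * S = J1 ∧
      Sᵀ * A * S = a • 1 := by
  obtain ⟨p, q, r, hp, hdet, hAeq⟩ :
      ∃ p q r, 0 < p ∧ 0 < p * r - q * q ∧ A = !![p, q; q, r] := by
    refine ⟨A 0 0, A 0 1, A 1 1, diag_pos_of_posDef hA 0, ?_, ?_⟩
    · have hd := hA.det_pos
      rw [Matrix.det_fin_two] at hd
      have hq : A 1 0 = A 0 1 := by
        conv_lhs => rw [← hA.isHermitian.eq]
        rfl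
      rw [hq] at hd; linarith
    · have hq : A 1 0 = A 0 1 := by
        conv_lhs => rw [← hA.isHermitian.eq]
        rfl
      ext i j; fin_cases i <;> fin_cases j <;> simp [hq]
  obtain ⟨a, ha, ha2⟩ : ∃ a, 0 < a ∧ a * a = p * r - q * q :=
    ⟨Real.sqrt _, Real.sqrt_pos.2 hdet, Real.mul_self_sqrt hdet.le⟩
  have hpa : 0 < p * a := mul_pos hp ha
  obtain ⟨c, hc2⟩ : ∃ c, c * c * (p * a) = 1 :=
    ⟨(Real.sqrt (p * a))⁻¹, by
      rw [← mul_inv, Real.mul_self_sqrt hpa.le]; exact inv_mul_cancel₀ hpa.ne'⟩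
  rw [hAeq]
  refine ⟨!![c * a, -(c * q); 0, c * p], a, ha, ?_, ?_⟩
  · rw [sympl_det]
    have hdet1 : (!![c * a, -(c * q); 0, c * p] : Matrix (Fin 2) (Fin 2) ℝ).det = 1 := by
      rw [Matrix.det_fin_two]
      norm_num
      linear_combination hc2
    rw [hdet1, one_smul]
  · ext i j
    fin_cases i <;> fin_cases j <;>
      norm_num [Matrix.mul_apply, Fin.sum_univ_succ]
    · linear_combination a * hc2
    · ring
    · left; ring
    · linear_combination a * hc2 - c * c * p * ha2

lemma blocks_posDef {A C B : Matrix (Fin 2) (Fin 2) ℝ}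
    (h : (fromBlocks A C Cᵀ B).PosDef) : A.PosDef ∧ B.PosDef := by
  obtain ⟨hherm, hpos⟩ := posDef_iff_dotProduct_mulVec.mp h
  have hherm' := hherm.eq
  rw [Matrix.conjTranspose_eq_transpose_of_trivial, fromBlocks_transpose] at hherm'
  constructor
  · refine posDef_iff_dotProduct_mulVec.mpr ⟨?_, fun x hx => ?_⟩
    · have := congrArg Matrix.toBlocks₁₁ hherm'
      simpa [Matrix.IsHermitian,
        Matrix.conjTranspose_eq_transpose_of_trivial] using this
    · have hx' : (Sum.elim x 0 : Fin 2 ⊕ Fin 2 → ℝ) ≠ 0 := by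
        intro h0; apply hx; ext i
        exact congrFun h0 (Sum.inl i)
      have := hpos hx'
      simpa [fromBlocks_mulVec, sumElim_dotProduct_sumElim] using this
  · refine posDef_iff_dotProduct_mulVec.mpr ⟨?_, fun x hx => ?_⟩
    · have := congrArg Matrix.toBlocks₂₂ hherm'
      simpa [Matrix.IsHermitian,
        Matrix.conjTranspose_eq_transpose_of_trivial] using this
    · have hx' : (Sum.elim 0 x : Fin 2 ⊕ Fin 2 → ℝ) ≠ 0 := by
        intro h0; apply hx; ext i
        exact congrFun h0 (Sum.inr i)
      have := hpos hx'
      simpa [fromBlocks_mulVec, sumElim_dotProduct_sumElim] using this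

lemma sandwich2 {n : Type*} [Fintype n] (S T S' T' M : Matrix n n ℝ) :
    (S * T)ᵀ * M * (S' * T') = Tᵀ * (Sᵀ * M * S') * T' := by
  simp only [Matrix.transpose_mul, Matrix.mul_assoc]

lemma rot_det {u : ℂ} (hu : ‖u‖ = 1) : (cmat u 0).det = 1 := by
  have h : u.re * u.re + u.im * u.im = 1 := by
    have := Complex.normSq_eq_norm_sq u
    rw [hu] at this
    simpa [Complex.normSq_apply] using this
  rw [Matrix.det_fin_two]
  simp [cmat]
  linear_combination h

lemma rot_orth {u : ℂ} (hu : ‖u‖ = 1) : (cmat u 0)ᵀ * cmat u 0 = 1 := by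
  rw [cmat_transpose, cmat_mul]
  have : conj' u * u = 1 := by rw [mul_comm]; exact unit_mul_conj hu
  simp only [mul_zero, zero_mul, add_zero, zero_add, map_zero, this]
  exact cmat_one

lemma rot_sympl {u : ℂ} (hu : ‖u‖ = 1) : (cmat u 0)ᵀ * J1 * cmat u 0 = J1 := by
  rw [sympl_det, rot_det hu, one_smul]

lemma std_reindex (a b kx kp : ℝ) :
    (Matrix.reindex finSumFinEquiv finSumFinEquiv
      (fromBlocks (a • (1 : Matrix (Fin 2) (Fin 2) ℝ)) !![kx,0;0,kp] !![kx,0;0,kp]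
        (b • (1 : Matrix (Fin 2) (Fin 2) ℝ)))) = stdForm a b kx kp := by
  have e0 : (finSumFinEquiv (m := 2) (n := 2)).symm (0 : Fin 4) = Sum.inl 0 := by decide
  have e1 : (finSumFinEquiv (m := 2) (n := 2)).symm (1 : Fin 4) = Sum.inl 1 := by decide
  have e2 : (finSumFinEquiv (m := 2) (n := 2)).symm (2 : Fin 4) = Sum.inr 0 := by decide
  have e3 : (finSumFinEquiv (m := 2) (n := 2)).symm (3 : Fin 4) = Sum.inr 1 := by decide
  ext i j
  fin_cases i <;> fin_cases j <;>
    simp [stdForm, Matrix.reindex_apply, Matrix.submatrix_apply, e0, e1, e2, e3,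
      Matrix.fromBlocks, Matrix.one_apply]

theorem stmt14 (γ : Matrix (Fin 4) (Fin 4) ℝ) (hsym : γ.IsSymm) (hpd : γ.PosDef)
    (hphys : (γ.map (Complex.ofReal) + Complex.I • J2.map (Complex.ofReal)).PosSemidef) :
    ∃ (SA SB : Matrix (Fin 2) (Fin 2) ℝ) (na nb kx kp : ℝ),
      SAᵀ * J1 * SA = J1 ∧ SBᵀ * J1 * SB = J1 ∧
      0 < na ∧ 0 < nb ∧ |kp| ≤ kx ∧
      (dsum SA SB)ᵀ * γ * dsum SA SB = stdForm na nb kx kp := by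
  set e : Fin 2 ⊕ Fin 2 ≃ Fin 4 := finSumFinEquiv (m := 2) (n := 2) with he
  set G : Matrix (Fin 2 ⊕ Fin 2) (Fin 2 ⊕ Fin 2) ℝ := γ.submatrix e e with hG
  have hγ : γ = Matrix.reindex e e G := by
    ext i j
    simp [hG, Matrix.reindex_apply]
  -- G is positive definite
  have hGsymm : Gᵀ = G := by
    rw [hG, Matrix.transpose_submatrix, hsym.eq]
  have hGpd : G.PosDef := by
    refine posDef_iff_dotProduct_mulVec.mpr ⟨?_, ?_⟩
    · rw [Matrix.IsHermitian, Matrix.conjTranspose_eq_transpose_of_trivial]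
      exact hGsymm
    · intro x hx
      have hx' : (x ∘ e.symm) ≠ 0 := by
        intro h0; apply hx; ext i
        simpa using congrFun h0 (e i)
      have hkey : star x ⬝ᵥ G *ᵥ x = star (x ∘ e.symm) ⬝ᵥ γ *ᵥ (x ∘ e.symm) := by
        rw [hG]
        have hmv : (γ.submatrix e e) *ᵥ x = (γ *ᵥ (x ∘ e.symm)) ∘ e := by
          ext i
          rw [show (x : Fin 2 ⊕ Fin 2 → ℝ) = (x ∘ e.symm) ∘ e by ext k; simp]
          rw [Matrix.submatrix_mulVec_equiv]
        rw [hmv]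
        simp only [star_trivial, dotProduct, Function.comp]
        exact (Equiv.sum_comp e fun i => x (e.symm i) * (γ *ᵥ fun j => x (e.symm j)) i).symm
      rw [hkey]
      exact hpd.dotProduct_mulVec_pos hx'
  -- block decomposition of G
  set A : Matrix (Fin 2) (Fin 2) ℝ := G.toBlocks₁₁ with hA
  set C : Matrix (Fin 2) (Fin 2) ℝ := G.toBlocks₁₂ with hC
  set B : Matrix (Fin 2) (Fin 2) ℝ := G.toBlocks₂₂ with hB
  have h21 : G.toBlocks₂₁ = Cᵀ := by
    ext i j
    show G (Sum.inr i) (Sum.inl j) = G (Sum.inl j) (Sum.inr i)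
    conv_lhs => rw [← hGsymm]
    rfl
  have hGblocks : G = fromBlocks A C Cᵀ B := by
    rw [hA, hC, hB, ← h21, Matrix.fromBlocks_toBlocks]
  have hApd : A.PosDef := (blocks_posDef (hGblocks ▸ hGpd)).1
  have hBpd : B.PosDef := (blocks_posDef (hGblocks ▸ hGpd)).2
  obtain ⟨S1, a, ha, hS1sym, hS1A⟩ := williamson2 A hApd
  obtain ⟨S2, b, hb, hS2sym, hS2B⟩ := williamson2 B hBpd
  obtain ⟨u, v, kx, kp, hu, hv, hkxp, hrot⟩ := rotdiag (S1ᵀ * C * S2)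
  refine ⟨S1 * cmat u 0, S2 * cmat v 0, a, b, kx, kp, ?_, ?_, ha, hb, hkxp, ?_⟩
  · rw [sandwich2, hS1sym, rot_sympl hu]
  · rw [sandwich2, hS2sym, rot_sympl hv]
  · -- main computation
    have hAblock : (S1 * cmat u 0)ᵀ * A * (S1 * cmat u 0) = a • 1 := by
      rw [sandwich2, hS1A, Matrix.mul_smul, Matrix.mul_one, Matrix.smul_mul, rot_orth hu]
    have hBblock : (S2 * cmat v 0)ᵀ * B * (S2 * cmat v 0) = b • 1 := by
      rw [sandwich2, hS2B, Matrix.mul_smul, Matrix.mul_one, Matrix.smul_mul, rot_orth hv]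
    have hCblock : (S1 * cmat u 0)ᵀ * C * (S2 * cmat v 0) = !![kx,0;0,kp] := by
      rw [sandwich2, hrot]
    have hCblock' : (S2 * cmat v 0)ᵀ * Cᵀ * (S1 * cmat u 0) = !![kx,0;0,kp] := by
      have h1 : (S2 * cmat v 0)ᵀ * Cᵀ * (S1 * cmat u 0) =
          ((S1 * cmat u 0)ᵀ * C * (S2 * cmat v 0))ᵀ := by
        simp only [Matrix.transpose_mul, Matrix.transpose_transpose, Matrix.mul_assoc]
      rw [h1, hCblock]
      ext i j; fin_cases i <;> fin_cases j <;> simp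
    rw [hγ, dsum, ← he]
    rw [Matrix.transpose_reindex]
    have hmul : ∀ (M N : Matrix (Fin 2 ⊕ Fin 2) (Fin 2 ⊕ Fin 2) ℝ),
        (Matrix.reindex e e M) * (Matrix.reindex e e N) = Matrix.reindex e e (M * N) := by
      intro M N
      simp only [Matrix.reindex_apply]
      exact Matrix.submatrix_mul_equiv M N _ _ _
    rw [hmul, hmul, ← std_reindex a b kx kp, ← he]
    congr 1
    rw [hGblocks, Matrix.fromBlocks_transpose, Matrix.transpose_zero,
      Matrix.fromBlocks_multiply, Matrix.fromBlocks_multiply]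
    simp only [Matrix.zero_mul, Matrix.mul_zero, add_zero, zero_add]
    rw [hAblock, hBblock, hCblock, hCblock']
end
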